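/- arXiv:1805.09151 — 2 statements merged into one kernel-verified Lean document; each statement's English description precedes it below -/
import Mathlib

section
/- Let G ∈ 𝒞𝒢^s(n) with 2 ≤ s ≤ n−3, let v* be a vertex of minimum degree t of G, and set X = N(v*), Y = V(G) ∖ N[v*]. Suppose G[Y] is isomorphic to a complete multipartite graph with at least two parts, and let y, y' ∈ Y be two non-adjacent vertices with N_X(y') ∖ N_X(y) ≠ ∅. Then N_X(y) = ∅ and N_X(y') = X; consequently N(y') is the disjoint union of N(v*) and N(y), so y' is a congruent vertex of II-type. -/
open Matrix BigOperators

namespace TwoPosEig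

variable {V : Type*}

/-- The real adjacency matrix of a simple graph (classical decidability). -/
noncomputable def adjMat [Fintype V] [DecidableEq V] (G : SimpleGraph V) : Matrix V V ℝ :=
  letI := Classical.decRel G.Adj
  G.adjMatrix ℝ

lemma adjMat_isHermitian [Fintype V] [DecidableEq V] (G : SimpleGraph V) :
    (adjMat G).IsHermitian := by
  letI := Classical.decRel G.Adj
  rw [Matrix.IsHermitian, Matrix.conjTranspose_eq_transpose_of_trivial]
  exact SimpleGraph.isSymm_adjMatrix G

/-- The eigenvalues of (the adjacency matrix of) a graph, as a function on vertices. -/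
noncomputable def eigs [Fintype V] [DecidableEq V] (G : SimpleGraph V) : V → ℝ :=
  (adjMat_isHermitian G).eigenvalues

/-- `p(G)`: the number of positive eigenvalues (with multiplicity). -/
noncomputable def posCount [Finite V] (G : SimpleGraph V) : ℕ :=
  letI := Fintype.ofFinite V
  letI := Classical.decEq V
  Nat.card {i : V // 0 < eigs G i}

/-- `η(G)`: the number of zero eigenvalues (with multiplicity), the nullity. -/
noncomputable def nullCount [Finite V] (G : SimpleGraph V) : ℕ :=
  letI := Fintype.ofFinite V
  letI := Classical.decEq V
  Nat.card {i : V // eigs G i = 0}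

/-- `λ_k(G)`: the `k`-th largest eigenvalue (1-indexed); junk value `0` out of range. -/
noncomputable def lam [Finite V] (G : SimpleGraph V) (k : ℕ) : ℝ :=
  letI := Fintype.ofFinite V
  letI := Classical.decEq V
  (((Finset.univ.val.map (eigs G)).sort (· ≤ ·)).reverse).getD (k - 1) 0

/-- Membership in `𝒢^s(n)` (the order `n` being the cardinality of the vertex type):
`p(G) = 2` and `η(G) = s`. -/
def memClass [Finite V] (s : ℕ) (G : SimpleGraph V) : Prop :=
  posCount G = 2 ∧ nullCount G = s

/-- `v` is a congruent vertex of I-type: some other vertex `u`, non-adjacent to `v`,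
has the same neighbourhood. -/
def ITypeVertex (G : SimpleGraph V) (v : V) : Prop :=
  ∃ u, u ≠ v ∧ ¬ G.Adj u v ∧ G.neighborSet u = G.neighborSet v

/-- `u` is a congruent vertex of II-type: there are two non-adjacent vertices `v, w`
such that `N(u)` is a disjoint union of `N(v)` and `N(w)`. -/
def IITypeVertex (G : SimpleGraph V) (u : V) : Prop :=
  ∃ v w, v ≠ w ∧ ¬ G.Adj v w ∧ Disjoint (G.neighborSet v) (G.neighborSet w) ∧
    G.neighborSet u = G.neighborSet v ∪ G.neighborSet w

/-- `u v x y` is a congruent (induced) quadrangle with congruent edges `uv`, `xy`. -/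
def CongruentQuad (G : SimpleGraph V) (u v x y : V) : Prop :=
  u ≠ v ∧ u ≠ x ∧ u ≠ y ∧ v ≠ x ∧ v ≠ y ∧ x ≠ y ∧
  G.Adj u v ∧ G.Adj v x ∧ G.Adj x y ∧ G.Adj y u ∧ ¬ G.Adj u x ∧ ¬ G.Adj v y ∧
  G.neighborSet u \ {y, v} = G.neighborSet v \ {u, x} ∧
  G.neighborSet x \ {v, y} = G.neighborSet y \ {x, u}

/-- A congruent vertex of III-type: a vertex of some congruent quadrangle. -/
def IIITypeVertex (G : SimpleGraph V) (z : V) : Prop :=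
  ∃ u v x y, CongruentQuad G u v x y ∧ (z = u ∨ z = v ∨ z = x ∨ z = y)

/-- Membership in `𝒢_1^s(n)`: a connected graph obtained by adding a congruent vertex
of I-type to some graph in `𝒢^{s-1}(n-1)`. -/
def memG1 {n : ℕ} (s : ℕ) (G : SimpleGraph (Fin n)) : Prop :=
  G.Connected ∧ ∃ v : Fin n, ITypeVertex G v ∧ memClass (s - 1) (G.induce {v}ᶜ)

/-- Membership in `𝒢_2^s(n)`. -/
def memG2 {n : ℕ} (s : ℕ) (G : SimpleGraph (Fin n)) : Prop :=
  G.Connected ∧ ∃ v : Fin n, IITypeVertex G v ∧ memClass (s - 1) (G.induce {v}ᶜ)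

/-- Membership in `𝒢_3^s(n)`. -/
def memG3 {n : ℕ} (s : ℕ) (G : SimpleGraph (Fin n)) : Prop :=
  G.Connected ∧ ∃ v : Fin n, IIITypeVertex G v ∧ memClass (s - 1) (G.induce {v}ᶜ)

/-- Oboudi's graph `G_m`: two cliques `K_{⌈m/2⌉}` (on `v_1, …`) and `K_{⌊m/2⌋}`
(on `w_1, …`), where `v_i ∼ w_j` iff `j ≥ ⌊m/2⌋ - i + 2` (1-indexed), i.e. (0-indexed)
`⌊m/2⌋ ≤ i + j`. -/
def oboudi (m : ℕ) : SimpleGraph (Fin ((m + 1) / 2) ⊕ Fin (m / 2)) :=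
  SimpleGraph.fromRel fun a b =>
    match a, b with
    | Sum.inl _, Sum.inl _ => True
    | Sum.inr _, Sum.inr _ => True
    | Sum.inl i, Sum.inr j => m / 2 ≤ (i : ℕ) + (j : ℕ)
    | Sum.inr _, Sum.inl _ => False

/-- The generalized lexicographic product `G[K_{t v}]`: each vertex `v` is replaced by a
clique of order `t v`, with complete joins along edges of `G`. -/
def lexProd (G : SimpleGraph V) (t : V → ℕ) : SimpleGraph (Σ v : V, Fin (t v)) :=
  SimpleGraph.fromRel fun a b => a.1 = b.1 ∨ G.Adj a.1 b.1

/-- Index conversion identifying the vertices `v_1, …, v_{⌈k/2⌉}, w_1, …, w_{⌊k/2⌋}`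
of `G_k` with `Fin k` (in this order). -/
def toIdx {k : ℕ} : Fin ((k + 1) / 2) ⊕ Fin (k / 2) → Fin k
  | Sum.inl i => ⟨(i : ℕ), by have := i.isLt; omega⟩
  | Sum.inr j => ⟨(k + 1) / 2 + (j : ℕ), by have := j.isLt; omega⟩

/-- `B_k(n_1, …, n_k) = G_k[K_{n_1}, …, K_{n_k}]`. -/
def bGraph (k : ℕ) (nn : Fin k → ℕ) :
    SimpleGraph (Σ v : Fin ((k + 1) / 2) ⊕ Fin (k / 2), Fin (nn (toIdx v))) :=
  lexProd (oboudi k) fun v => nn (toIdx v)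

/-- Membership in `𝓓* = {B_k(n_1,…,n_k) ∈ 𝓑_k^{00}(n) : 4 ≤ k ≤ 14, n ≤ 14}` (up to
isomorphism). -/
def memDstar {n : ℕ} (G : SimpleGraph (Fin n)) : Prop :=
  ∃ (k : ℕ) (nn : Fin k → ℕ), 4 ≤ k ∧ k ≤ 14 ∧ (∀ i, 1 ≤ nn i) ∧ (∑ i, nn i) ≤ 14 ∧
    lam (bGraph k nn) 3 = 0 ∧ lam (bGraph k nn) 4 = 0 ∧ Nonempty (G ≃g bGraph k nn)

/-- The degree of a vertex. -/
noncomputable def deg [Finite V] (G : SimpleGraph V) (v : V) : ℕ :=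
  Nat.card (G.neighborSet v)

/-- `v` is a vertex of minimum degree. -/
def IsMinDegVertex [Finite V] (G : SimpleGraph V) (v : V) : Prop :=
  ∀ w, deg G v ≤ deg G w

/-- The set `Y = V(G) ∖ N[v]`. -/
def Yset (G : SimpleGraph V) (v : V) : Set V :=
  (G.neighborSet v ∪ {v})ᶜ

/-- `G` is `X`-complete with respect to `v`: `G[Y] ≅ K_{n-t-1}` with `n-t-1 ≥ 2`
and `G[X]` is complete, where `X = N(v)`, `Y = V(G) ∖ N[v]`. -/
def IsXComplete [Finite V] (G : SimpleGraph V) (v : V) : Prop :=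
  2 ≤ (Yset G v).ncard ∧ (Yset G v).Pairwise G.Adj ∧ (G.neighborSet v).Pairwise G.Adj

/-- An `X`-complete graph is reduced when the traces on `Y` of the neighbourhoods of
vertices of `X` form a chain. -/
def IsReduced (G : SimpleGraph V) (v : V) : Prop :=
  ∀ x ∈ G.neighborSet v, ∀ x' ∈ G.neighborSet v,
    G.neighborSet x ∩ Yset G v ⊆ G.neighborSet x' ∩ Yset G v ∨
    G.neighborSet x' ∩ Yset G v ⊆ G.neighborSet x ∩ Yset G v

/-!
Fix `x ∈ N_X(y') ∖ N_X(y)`, any `x' ∈ X`, and a vertex `z ∈ Y` outside the part of `y` and `y'`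
(so `z ∼ y, y'`). The six vertices `v, x, x', y, y', z` induce one of 32 graphs, depending on the
five unknown pairs `xx', x'y, x'y', xz, x'z`. By Sylvester's law of inertia `p(G)` is the largest
dimension of a subspace on which the adjacency form is positive definite, so it cannot drop when
passing to an induced subgraph. On the span of `v + x + x' + y`, `x - y + y'` and `v - y' - z` the
form is positive definite in each of the 24 graphs other than those with `x' ≁ y` and `x' ∼ y'`,
so `p(G) = 2` forces `x' ≁ y` and `x' ∼ y'` for every `x' ∈ X`. Since `y, y'` have the same
neighbours in the complete multipartite `G[Y]`, this gives `N(y') = N(v) ⊔ N(y)`.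
-/

theorem _root_.QuadraticForm.sigPos_comp_le {𝕜 M M' : Type*} [Field 𝕜] [LinearOrder 𝕜]
    [IsStrictOrderedRing 𝕜] [AddCommGroup M] [Module 𝕜 M] [AddCommGroup M'] [Module 𝕜 M']
    [FiniteDimensional 𝕜 M] [FiniteDimensional 𝕜 M'] (Q : QuadraticForm 𝕜 M)
    (f : M' →ₗ[𝕜] M) : sigPos (Q.comp f) ≤ sigPos Q := by
  obtain ⟨W, hW, hpos⟩ := exists_finrank_eq_sigPos_and_posDef (Q.comp f)
  have hinj : Function.Injective (f.domRestrict W) := by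
    rw [← LinearMap.ker_eq_bot, Submodule.eq_bot_iff]
    intro x hx
    by_contra hx0
    have := hpos x hx0
    simp_all
  rw [← hW, ← LinearMap.finrank_range_of_inj hinj]
  refine le_sigPos_of_posDef Q ?_
  rintro ⟨_, x, rfl⟩ hx
  exact hpos x (by rintro rfl; simp at hx)

theorem _root_.Matrix.toQuadraticForm'_transpose_mul_mul {R m n : Type*} [CommRing R]
    [Fintype m] [DecidableEq m] [Fintype n] [DecidableEq n] (A : Matrix m m R)
    (B : Matrix m n R) :
    (Bᵀ * A * B).toQuadraticForm' = A.toQuadraticForm'.comp (Matrix.toLin' B) := by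
  ext x
  simp only [Matrix.toQuadraticForm', LinearMap.BilinMap.toQuadraticMap_apply,
    Matrix.toLinearMap₂'_apply', QuadraticMap.comp_apply, Matrix.toLin'_apply]
  rw [← Matrix.mulVec_mulVec, ← Matrix.mulVec_mulVec, Matrix.dotProduct_mulVec,
    Matrix.vecMul_transpose]

theorem _root_.Matrix.sigPos_transpose_mul_mul_le {𝕜 m n : Type*} [Field 𝕜] [LinearOrder 𝕜]
    [IsStrictOrderedRing 𝕜] [Fintype m] [DecidableEq m] [Fintype n] [DecidableEq n]
    (A : Matrix m m 𝕜) (B : Matrix m n 𝕜) :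
    sigPos (Bᵀ * A * B).toQuadraticForm' ≤ sigPos A.toQuadraticForm' := by
  rw [Matrix.toQuadraticForm'_transpose_mul_mul]
  exact QuadraticForm.sigPos_comp_le _ _

theorem _root_.Matrix.submatrix_eq_transpose_mul_mul {R m n : Type*} [CommRing R]
    [Fintype m] [DecidableEq m] [Fintype n] (A : Matrix m m R) (f : n → m) :
    A.submatrix f f =
      ((1 : Matrix m m R).submatrix id f)ᵀ * A * (1 : Matrix m m R).submatrix id f := by
  have h := Matrix.mul_submatrix_one (Equiv.refl m) f A
  have h' := Matrix.one_submatrix_mul f (Equiv.refl m) (A.submatrix id f)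
  simp only [Equiv.coe_refl, Equiv.refl_symm, Function.id_comp] at h h'
  rw [Matrix.transpose_submatrix, Matrix.transpose_one, Matrix.mul_assoc, h, h',
    Matrix.submatrix_submatrix]
  rfl

theorem _root_.Matrix.toQuadraticForm'_diagonal {R n : Type*} [CommRing R]
    [Fintype n] [DecidableEq n] (w : n → R) :
    (Matrix.diagonal w).toQuadraticForm' = QuadraticMap.weightedSumSquares R w := by
  ext x
  simp [Matrix.toQuadraticForm', Matrix.toLinearMap₂'_apply', dotProduct, Matrix.mulVec_diagonal,
    mul_left_comm]

theorem _root_.Matrix.IsHermitian.sigPos_toQuadraticForm' {n : Type*} [Fintype n]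
    [DecidableEq n] {A : Matrix n n ℝ} (hA : A.IsHermitian) :
    sigPos A.toQuadraticForm' = Nat.card {i // 0 < hA.eigenvalues i} := by
  set U : Matrix n n ℝ := (hA.eigenvectorUnitary : Matrix n n ℝ)
  have hUU : U * Uᵀ = 1 := by
    simpa [Matrix.star_eq_conjTranspose] using
      Matrix.mem_unitaryGroup_iff.1 hA.eigenvectorUnitary.2
  have hdiag : Uᵀ * A * U = Matrix.diagonal hA.eigenvalues := by
    simpa [Matrix.star_eq_conjTranspose, U] using hA.conjStarAlgAut_star_eigenvectorUnitary
  have hA' : A = Uᵀᵀ * Matrix.diagonal hA.eigenvalues * Uᵀ := by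
    rw [Matrix.transpose_transpose, ← hdiag, ← mul_assoc, ← mul_assoc, hUU, one_mul, mul_assoc,
      hUU, mul_one]
  have hD : sigPos (Matrix.diagonal hA.eigenvalues).toQuadraticForm' =
      Nat.card {i // 0 < hA.eigenvalues i} := by
    rw [Matrix.toQuadraticForm'_diagonal, QuadraticForm.sigPos_weightedSumSquares,
      ← Nat.card_coe_set_eq]
    rfl
  refine le_antisymm ?_ ?_
  · conv_lhs => rw [hA']
    exact hD ▸ Matrix.sigPos_transpose_mul_mul_le _ _
  · exact hD ▸ hdiag ▸ Matrix.sigPos_transpose_mul_mul_le _ _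

theorem _root_.Matrix.toQuadraticForm'_posDef_of_fin_three {𝕜 : Type*} [Field 𝕜]
    [LinearOrder 𝕜] [IsStrictOrderedRing 𝕜] {M : Matrix (Fin 3) (Fin 3) 𝕜}
    (hM : M.IsSymm) (h₁ : 0 < M 0 0) (h₂ : 0 < M 0 0 * M 1 1 - M 0 1 * M 1 0)
    (h₃ : 0 < M.det) : M.toQuadraticForm'.PosDef := by
  intro x hx
  have hsymm : ∀ i j, M j i = M i j := fun i j => by simpa using congrFun (congrFun hM i) j
  set d₂ := M 0 0 * M 1 1 - M 0 1 * M 1 0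
  have hq : M.toQuadraticForm' x = ∑ i, ∑ j, x i * M i j * x j := by
    simp [Matrix.toQuadraticForm', Matrix.toLinearMap₂'_apply', dotProduct, Matrix.mulVec,
      Finset.mul_sum, mul_assoc]
  -- `LDLᵀ` decomposition of `M`
  have hldl : M 0 0 * d₂ * M.toQuadraticForm' x =
      d₂ * (M 0 0 * x 0 + M 0 1 * x 1 + M 0 2 * x 2) ^ 2 +
        (d₂ * x 1 + (M 0 0 * M 1 2 - M 0 1 * M 0 2) * x 2) ^ 2 + M 0 0 * M.det * x 2 ^ 2 := by
    simp only [hq, Fin.sum_univ_three, Matrix.det_fin_three, d₂, hsymm 1 0, hsymm 2 0, hsymm 2 1]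
    ring
  have hrhs : 0 < d₂ * (M 0 0 * x 0 + M 0 1 * x 1 + M 0 2 * x 2) ^ 2 +
      (d₂ * x 1 + (M 0 0 * M 1 2 - M 0 1 * M 0 2) * x 2) ^ 2 + M 0 0 * M.det * x 2 ^ 2 := by
    by_cases hx₂ : x 2 = 0
    · by_cases hx₁ : x 1 = 0
      · have hx₀ : x 0 ≠ 0 := fun hx₀ => hx (by ext i; fin_cases i <;> assumption)
        norm_num [hx₁, hx₂]
        positivity
      · norm_num [hx₂]
        positivity
    · positivity
  exact pos_of_mul_pos_right (hldl ▸ hrhs) (by positivity)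

theorem posCount_eq_sigPos [Fintype V] [DecidableEq V] (G : SimpleGraph V) :
    posCount G = sigPos (adjMat G).toQuadraticForm' := by
  rw [(adjMat_isHermitian G).sigPos_toQuadraticForm']
  unfold posCount eigs
  congr!

theorem adjMat_comap {W : Type*} [Fintype V] [DecidableEq V] [Fintype W] [DecidableEq W]
    (G : SimpleGraph V) (f : W → V) : adjMat (G.comap f) = (adjMat G).submatrix f f :=
  rfl

theorem adjMat_eq_map_adjMatrix {W : Type*} [Fintype W] [DecidableEq W] (H : SimpleGraph W)
    [DecidableRel H.Adj] : adjMat H = (H.adjMatrix ℤ).map (Int.castRingHom ℝ) := by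
  ext i j
  simp [adjMat, SimpleGraph.adjMatrix_apply]

theorem posCount_comap_le {W : Type*} [Finite V] [Finite W] (G : SimpleGraph V) (f : W → V) :
    posCount (G.comap f) ≤ posCount G := by
  classical
  have := Fintype.ofFinite V
  have := Fintype.ofFinite W
  rw [posCount_eq_sigPos, posCount_eq_sigPos, adjMat_comap, Matrix.submatrix_eq_transpose_mul_mul]
  exact Matrix.sigPos_transpose_mul_mul_le _ _

/-- Vertices `0, …, 5` stand for `v, x, x', y, y', z`: the edges `vx, vx', xy', yz, y'z` are
always present, and `a, b, c, d, e` switch the edges `xx', x'y, x'y', xz, x'z`. -/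
def sixVertexGraph (a b c d e : Bool) : SimpleGraph (Fin 6) :=
  SimpleGraph.fromRel fun i j =>
    (i, j) ∈ [(0, 1), (0, 2), (1, 4), (3, 5), (4, 5)] ∨
      (a ∧ (i, j) = (1, 2)) ∨ (b ∧ (i, j) = (2, 3)) ∨ (c ∧ (i, j) = (2, 4)) ∨
      (d ∧ (i, j) = (1, 5)) ∨ (e ∧ (i, j) = (2, 5))

instance (a b c d e : Bool) : DecidableRel (sixVertexGraph a b c d e).Adj := fun i j => by
  unfold sixVertexGraph; infer_instance

def sixVertexCert : Matrix (Fin 3) (Fin 6) ℤ :=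
  !![1, 1, 1, 1, 0, 0; 0, 1, 0, -1, 1, 0; 1, 0, 0, 0, -1, -1]

def sixVertexGram (a b c d e : Bool) : Matrix (Fin 3) (Fin 3) ℤ :=
  sixVertexCert * (sixVertexGraph a b c d e).adjMatrix ℤ * sixVertexCertᵀ

theorem sixVertexGram_isSymm_and_leadingMinors_pos {a b c d e : Bool} (h : (b || !c) = true) :
    (sixVertexGram a b c d e).IsSymm ∧ 0 < sixVertexGram a b c d e 0 0 ∧
      0 < sixVertexGram a b c d e 0 0 * sixVertexGram a b c d e 1 1 -
        sixVertexGram a b c d e 0 1 * sixVertexGram a b c d e 1 0 ∧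
      0 < (sixVertexGram a b c d e).det := by
  rw [Matrix.det_fin_three]
  revert a b c d e
  decide

theorem three_le_posCount_sixVertexGraph {a b c d e : Bool} (h : (b || !c) = true) :
    3 ≤ posCount (sixVertexGraph a b c d e) := by
  obtain ⟨hsymm, h₁, h₂, h₃⟩ :=
    sixVertexGram_isSymm_and_leadingMinors_pos (a := a) (d := d) (e := e) h
  set B : Matrix (Fin 6) (Fin 3) ℝ := (sixVertexCert.map (Int.castRingHom ℝ))ᵀ
  have hgram : Bᵀ * adjMat (sixVertexGraph a b c d e) * B =
      (sixVertexGram a b c d e).map (Int.castRingHom ℝ) := by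
    rw [Matrix.transpose_transpose, adjMat_eq_map_adjMatrix, sixVertexGram, Matrix.map_mul,
      Matrix.map_mul, Matrix.transpose_map]
  have hpos : (Bᵀ * adjMat (sixVertexGraph a b c d e) * B).toQuadraticForm'.PosDef := by
    rw [hgram]
    refine Matrix.toQuadraticForm'_posDef_of_fin_three (hsymm.map _) ?_ ?_ ?_
    · simpa using h₁
    · simp only [Matrix.map_apply, eq_intCast]
      exact_mod_cast h₂
    · rw [← RingHom.mapMatrix_apply, ← RingHom.map_det]
      simpa using h₃
  rw [posCount_eq_sigPos]
  calc 3 = Module.finrank ℝ (⊤ : Submodule ℝ (Fin 3 → ℝ)) := by simp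
    _ ≤ sigPos (Bᵀ * adjMat (sixVertexGraph a b c d e) * B).toQuadraticForm' :=
        le_sigPos_of_posDef _ fun x hx => hpos x (by simpa using hx)
    _ ≤ _ := Matrix.sigPos_transpose_mul_mul_le _ _

theorem not_adj_and_adj_of_posCount_le_two [Finite V] {G : SimpleGraph V} (hG : posCount G ≤ 2)
    {v x x' y y' z : V} (hvx : G.Adj v x) (hvx' : G.Adj v x') (hxy' : G.Adj x y')
    (hyz : G.Adj y z) (hy'z : G.Adj y' z) (hvy : ¬ G.Adj v y) (hvy' : ¬ G.Adj v y')
    (hvz : ¬ G.Adj v z) (hxy : ¬ G.Adj x y) (hyy' : ¬ G.Adj y y') :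
    ¬ G.Adj y x' ∧ G.Adj y' x' := by
  classical
  have hcomap : G.comap ![v, x, x', y, y', z] =
      sixVertexGraph (G.Adj x x') (G.Adj x' y) (G.Adj x' y') (G.Adj x z) (G.Adj x' z) := by
    ext i j
    fin_cases i <;> fin_cases j <;>
      simp [sixVertexGraph, hvx, hvx', hxy', hyz, hy'z, hvy, hvy', hvz, hxy, hyy', hvx.symm,
        hvx'.symm, hxy'.symm, hyz.symm, hy'z.symm, G.adj_comm x' x, G.adj_comm y x',
        G.adj_comm y' x', G.adj_comm z x, G.adj_comm z x', G.adj_comm y v, G.adj_comm y' v,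
        G.adj_comm z v, G.adj_comm y x, G.adj_comm y' y]
  by_contra h
  have hb : (decide (G.Adj x' y) || !decide (G.Adj x' y')) = true := by
    by_cases G.Adj x' y <;> simp_all [G.adj_comm _ x']
  have := (three_le_posCount_sixVertexGraph hb).trans (hcomap ▸ posCount_comap_le G _)
  omega
theorem adj_iff_adj_of_not_adj_of_iso_completeMultipartite {W ι : Type*} {β : ι → Type*}
    {H : SimpleGraph W} (φ : H ≃g SimpleGraph.completeMultipartiteGraph β) {a b : W}
    (hab : ¬ H.Adj a b) (c : W) : H.Adj a c ↔ H.Adj b c := by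
  rw [← φ.map_adj_iff] at hab
  rw [← φ.map_adj_iff, ← φ.map_adj_iff]
  simp_all [SimpleGraph.completeMultipartiteGraph]

theorem exists_adj_of_iso_completeMultipartite {W ι : Type*} {β : ι → Type*} [Nontrivial ι]
    [∀ i, Nonempty (β i)] {H : SimpleGraph W}
    (φ : H ≃g SimpleGraph.completeMultipartiteGraph β) (a : W) : ∃ c, H.Adj a c := by
  obtain ⟨j, hj⟩ := exists_ne (φ a).1
  refine ⟨φ.symm ⟨j, Classical.arbitrary _⟩, ?_⟩
  rw [← φ.map_adj_iff]
  simpa [SimpleGraph.completeMultipartiteGraph] using hj.symm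

theorem mem_Yset {G : SimpleGraph V} {v w : V} : w ∈ Yset G v ↔ w ≠ v ∧ ¬ G.Adj v w := by
  simp [Yset, not_or]

theorem neighborSet_eq_union_of_adj_iff {G : SimpleGraph V} {v y y' : V} (hvy : ¬ G.Adj v y)
    (hvy' : ¬ G.Adj v y') (hN : ∀ w, G.Adj v w → ¬ G.Adj y w ∧ G.Adj y' w)
    (hY : ∀ w, w ≠ v → ¬ G.Adj v w → (G.Adj y w ↔ G.Adj y' w)) :
    G.neighborSet y' = G.neighborSet v ∪ G.neighborSet y := by
  ext w
  simp only [Set.mem_union, SimpleGraph.mem_neighborSet]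
  by_cases hw : w = v
  · subst hw
    simp [G.adj_comm _ w, hvy, hvy']
  by_cases hvw : G.Adj v w
  · simp [hvw, (hN w hvw).2]
  · simp [hvw, hY w hw hvw]

theorem Y_multipartite_IItype_general {n s : ℕ}
    (G : SimpleGraph (Fin n)) (hG : memClass s G)
    (v : Fin n)
    (X Y : Set (Fin n)) (hX : X = G.neighborSet v) (hY : Y = Yset G v)
    (hstr : ∃ (l : ℕ) (nn : Fin l → ℕ), 2 ≤ l ∧ (∀ i, 1 ≤ nn i) ∧
      Nonempty ((G.induce Y) ≃g (SimpleGraph.completeMultipartiteGraph fun i => Fin (nn i))))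
    (y y' : Fin n) (hy : y ∈ Y) (hy' : y' ∈ Y) (hnadj : ¬ G.Adj y y')
    (hdiff : ((G.neighborSet y' ∩ X) \ (G.neighborSet y ∩ X)).Nonempty) :
    G.neighborSet y ∩ X = ∅ ∧ G.neighborSet y' ∩ X = X ∧
    Disjoint (G.neighborSet v) (G.neighborSet y) ∧
    G.neighborSet y' = G.neighborSet v ∪ G.neighborSet y ∧
    IITypeVertex G y' := by
  subst hX hY
  obtain ⟨l, nn, hl, hnn, ⟨φ⟩⟩ := hstr
  have : Nontrivial (Fin l) := Fin.nontrivial_iff_two_le.2 hl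
  have : ∀ i, Nonempty (Fin (nn i)) := fun i => Fin.pos_iff_nonempty.1 (hnn i)
  obtain ⟨hyv, hvy⟩ := mem_Yset.1 hy
  obtain ⟨-, hvy'⟩ := mem_Yset.1 hy'
  obtain ⟨x, ⟨hy'x, hvx⟩, hyx⟩ := hdiff
  have hsameY := adj_iff_adj_of_not_adj_of_iso_completeMultipartite φ (a := ⟨y, hy⟩)
    (b := ⟨y', hy'⟩) hnadj
  obtain ⟨⟨z, hz⟩, hyz⟩ := exists_adj_of_iso_completeMultipartite φ ⟨y, hy⟩
  have hN : ∀ w, G.Adj v w → ¬ G.Adj y w ∧ G.Adj y' w := fun w hvw =>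
    not_adj_and_adj_of_posCount_le_two hG.1.le hvx hvw hy'x.symm hyz ((hsameY _).1 hyz) hvy
      hvy' (mem_Yset.1 hz).2 (fun h => hyx ⟨h.symm, hvx⟩) hnadj
  have hdisj : Disjoint (G.neighborSet v) (G.neighborSet y) :=
    Set.disjoint_left.2 fun w hvw => (hN w hvw).1
  have hunion := neighborSet_eq_union_of_adj_iff hvy hvy' hN
    fun w hw hvw => hsameY ⟨w, mem_Yset.2 ⟨hw, hvw⟩⟩
  exact ⟨Set.inter_comm _ _ ▸ hdisj.inter_eq, Set.inter_eq_right.2 fun w hvw => (hN w hvw).2,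
    hdisj, hunion, v, y, hyv.symm, hvy, hdisj, hunion⟩

theorem Y_multipartite_IItype {n s : ℕ} (hs : 2 ≤ s) (hsn : s ≤ n - 3)
    (G : SimpleGraph (Fin n)) (hconn : G.Connected) (hG : memClass s G)
    (v : Fin n) (hv : IsMinDegVertex G v)
    (X Y : Set (Fin n)) (hX : X = G.neighborSet v) (hY : Y = Yset G v)
    (hstr : ∃ (l : ℕ) (nn : Fin l → ℕ), 2 ≤ l ∧ (∀ i, 1 ≤ nn i) ∧
      Nonempty ((G.induce Y) ≃g (SimpleGraph.completeMultipartiteGraph fun i => Fin (nn i))))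
    (y y' : Fin n) (hy : y ∈ Y) (hy' : y' ∈ Y) (hne : y ≠ y') (hnadj : ¬ G.Adj y y')
    (hdiff : ((G.neighborSet y' ∩ X) \ (G.neighborSet y ∩ X)).Nonempty) :
    G.neighborSet y ∩ X = ∅ ∧ G.neighborSet y' ∩ X = X ∧
    Disjoint (G.neighborSet v) (G.neighborSet y) ∧
    G.neighborSet y' = G.neighborSet v ∪ G.neighborSet y ∧
    IITypeVertex G y' :=
  Y_multipartite_IItype_general G hG v X Y hX hY hstr y y' hy hy' hnadj hdiff

end TwoPosEig
end

section
/- Let G ∈ 𝒞𝒢^s(n) with 2 ≤ s ≤ n−3 be a non-reduced X-complete graph (with respect to a minimum-degree vertex v*, X = N(v*), Y = V(G) ∖ N[v*]), and let x, x' ∈ X be non-reduced vertices. Then N_Y(x) ∖ N_Y(x') = {y} and N_Y(x') ∖ N_Y(x) = {y'} are singletons, N_X(y) ∖ N_X(y') = {x} and N_X(y') ∖ N_X(y) = {x'}, and the induced quadrangle x x' y' y is a congruent quadrangle with congruent edges xx' and y'y. -/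
/-!
If the adjacency form `z ↦ zᵀ A z` is positive definite on a three-dimensional space, then `A`
has three positive eigenvalues; so a graph with `p(G) = 2` induces no six-vertex graph that
carries such a space. With `X = N(v)` and `Y` both cliques, a second private neighbour `z ∈ Y`
of `x` (besides `y`) would make `v, x, x', y, z, y'` induce one such graph, and a second private
neighbour `z ∈ X` of `y` would make `v, x, x', z, y, y'` induce another. Hence both private
neighbourhoods are singletons, so every other neighbour of `x` is a neighbour of `x'` and every
other neighbour of `y` is a neighbour of `y'`: this is the congruence of the quadrangle `x x' y' y`.
-/

open Matrix BigOperators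

namespace TwoPosEig

variable {V : Type*}

section Spectral

variable {n : Type*} [Fintype n] [DecidableEq n] {A : Matrix n n ℝ}

lemma _root_.Matrix.IsHermitian.dotProduct_mulVec_self_eq_sum (hA : A.IsHermitian)
    (z : n → ℝ) :
    z ⬝ᵥ A *ᵥ z =
      ∑ i, hA.eigenvalues i * ((star (hA.eigenvectorUnitary : Matrix n n ℝ) *ᵥ z) i) ^ 2 := by
  set U : Matrix n n ℝ := ↑hA.eigenvectorUnitary
  have hspec : A = U * diagonal hA.eigenvalues * star U := by
    simpa [RCLike.ofReal_real_eq_id] using hA.spectral_theorem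
  have hvec : z ᵥ* U = star U *ᵥ z := by
    rw [star_eq_conjTranspose, conjTranspose_eq_transpose_of_trivial, mulVec_transpose]
  conv_lhs => rw [hspec]
  rw [← mulVec_mulVec, ← mulVec_mulVec, dotProduct_mulVec, hvec]
  simp only [dotProduct, mulVec_diagonal]
  exact Finset.sum_congr rfl fun i _ => by ring

theorem _root_.Matrix.IsHermitian.card_le_card_pos_eigenvalues (hA : A.IsHermitian)
    {ι : Type*} [Fintype ι] (T : Matrix n ι ℝ) (hT : (Tᵀ * A * T).PosDef) :
    Fintype.card ι ≤ Fintype.card {i // 0 < hA.eigenvalues i} := by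
  by_contra! hlt
  -- some `w ≠ 0` has `T w` orthogonal to all eigenvectors with positive eigenvalue
  set U : Matrix n n ℝ := star (hA.eigenvectorUnitary : Matrix n n ℝ)
  let ψ : (ι → ℝ) →ₗ[ℝ] ({i // 0 < hA.eigenvalues i} → ℝ) :=
    LinearMap.funLeft ℝ ℝ Subtype.val ∘ₗ (U * T).mulVecLin
  obtain ⟨w, hw, hw0⟩ := Submodule.exists_mem_ne_zero_of_ne_bot
    (LinearMap.ker_ne_bot_of_finrank_lt (f := ψ) (by simpa using hlt))
  have hpos := hT.dotProduct_mulVec_pos hw0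
  rw [star_trivial, ← mulVec_mulVec, ← mulVec_mulVec, dotProduct_mulVec, vecMul_transpose,
    hA.dotProduct_mulVec_self_eq_sum] at hpos
  refine hpos.not_ge (Finset.sum_nonpos fun i _ => ?_)
  by_cases hi : 0 < hA.eigenvalues i
  · have : (U *ᵥ T *ᵥ w) i = 0 := by
      simpa [ψ, mulVec_mulVec] using congrFun hw ⟨i, hi⟩
    simp [U, this]
  · exact mul_nonpos_of_nonpos_of_nonneg (not_lt.mp hi) (sq_nonneg _)

end Spectral

section Induced

variable {W : Type*}

open Classical in
lemma adjMat_apply [Fintype V] [DecidableEq V] (G : SimpleGraph V) (u w : V) :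
    adjMat G u w = if G.Adj u w then 1 else 0 := by
  simp [adjMat]

lemma adjMat_submatrix [Fintype V] [DecidableEq V] [Fintype W] [DecidableEq W]
    {G : SimpleGraph V} {H : SimpleGraph W} {f : W → V}
    (hf : ∀ i j, G.Adj (f i) (f j) ↔ H.Adj i j) :
    (adjMat G).submatrix f f = adjMat H := by
  ext i j
  by_cases h : H.Adj i j <;> simp [adjMat_apply, h, hf]

theorem card_le_posCount [Finite V] [Fintype W] [DecidableEq W]
    {G : SimpleGraph V} {H : SimpleGraph W} {f : W → V}
    (hf : ∀ i j, G.Adj (f i) (f j) ↔ H.Adj i j) {ι : Type*} [Fintype ι]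
    (T : Matrix W ι ℝ) (hT : (Tᵀ * adjMat H * T).PosDef) :
    Fintype.card ι ≤ posCount G := by
  let := Fintype.ofFinite V
  let := Classical.decEq V
  let P : Matrix V W ℝ := (1 : Matrix V V ℝ).submatrix id f
  have hP : Pᵀ * adjMat G * P = adjMat H := by
    rw [← adjMat_submatrix hf]
    ext i j
    simp [P, Matrix.mul_apply, Matrix.one_apply]
  have hPT : (P * T)ᵀ * adjMat G * (P * T) = Tᵀ * adjMat H * T := by
    rw [transpose_mul, ← hP]
    simp only [Matrix.mul_assoc]
  have := (adjMat_isHermitian G).card_le_card_pos_eigenvalues (P * T) (hPT ▸ hT)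
  rw [posCount, Nat.card_eq_fintype_card]
  exact this

end Induced

def obstructionY : SimpleGraph (Fin 6) :=
  SimpleGraph.fromEdgeSet
    {s(0, 1), s(0, 2), s(1, 2), s(1, 3), s(1, 4), s(2, 5), s(3, 4), s(3, 5), s(4, 5)}

lemma adjMat_obstructionY :
    adjMat obstructionY = !![0, 1, 1, 0, 0, 0; 1, 0, 1, 1, 1, 0; 1, 1, 0, 0, 0, 1;
      0, 1, 0, 0, 1, 1; 0, 1, 0, 1, 0, 1; 0, 0, 1, 1, 1, 0] := by
  ext i j
  fin_cases i <;> fin_cases j <;> simp [adjMat_apply, obstructionY]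

def obstructionX : SimpleGraph (Fin 6) :=
  SimpleGraph.fromEdgeSet
    {s(0, 1), s(0, 2), s(0, 3), s(1, 2), s(1, 3), s(2, 3), s(1, 4), s(3, 4), s(2, 5), s(4, 5)}

lemma adjMat_obstructionX :
    adjMat obstructionX = !![0, 1, 1, 1, 0, 0; 1, 0, 1, 1, 1, 0; 1, 1, 0, 1, 0, 1;
      1, 1, 1, 0, 1, 0; 0, 1, 0, 1, 0, 1; 0, 0, 1, 0, 1, 0] := by
  ext i j
  fin_cases i <;> fin_cases j <;> simp [adjMat_apply, obstructionX]

theorem three_le_posCount_of_obstructionY [Finite V] {G : SimpleGraph V} {f : Fin 6 → V}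
    (hf : ∀ i j, G.Adj (f i) (f j) ↔ obstructionY.Adj i j) : 3 ≤ posCount G := by
  let T : Matrix (Fin 6) (Fin 3) ℝ :=
    !![-1, 0, 0; -1, -2, -1; 0, 1, 2; 0, -2, 0; 0, 0, -1; 2, 1, 2]
  have hT : Tᵀ * adjMat obstructionY * T = 2 := by
    rw [adjMat_obstructionY]
    ext i j
    fin_cases i <;> fin_cases j <;>
      norm_num [T, Matrix.mul_apply, Fin.sum_univ_succ, Matrix.ofNat_apply]
  simpa using card_le_posCount hf T (hT ▸ PosDef.ofNat 2)

theorem three_le_posCount_of_obstructionX [Finite V] {G : SimpleGraph V} {f : Fin 6 → V}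
    (hf : ∀ i j, G.Adj (f i) (f j) ↔ obstructionX.Adj i j) : 3 ≤ posCount G := by
  let T : Matrix (Fin 6) (Fin 3) ℝ :=
    !![-1, -1, 0; 0, 0, -1; -1, 0, 2; 0, 0, -1; 0, 1, -2; 0, 1, 2]
  have hT : Tᵀ * adjMat obstructionX * T = 2 := by
    rw [adjMat_obstructionX]
    ext i j
    fin_cases i <;> fin_cases j <;>
      norm_num [T, Matrix.mul_apply, Fin.sum_univ_succ, Matrix.ofNat_apply]
  simpa using card_le_posCount hf T (hT ▸ PosDef.ofNat 2)

lemma mem_Yset_iff {G : SimpleGraph V} {v y : V} : y ∈ Yset G v ↔ y ≠ v ∧ ¬G.Adj v y := by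
  simp [Yset]

lemma eq_or_adj_or_mem_Yset (G : SimpleGraph V) (v z : V) :
    z = v ∨ G.Adj v z ∨ z ∈ Yset G v := by
  rw [mem_Yset_iff]
  tauto

lemma neighborSet_sdiff_eq_of_adj {G : SimpleGraph V} {a a' b b' : V}
    (h : ∀ z, G.Adj a z → z ≠ b → z ≠ a' → G.Adj a' z)
    (h' : ∀ z, G.Adj a' z → z ≠ b' → z ≠ a → G.Adj a z)
    (hab' : ¬G.Adj a b') (ha'b : ¬G.Adj a' b) :
    G.neighborSet a \ {b, a'} = G.neighborSet a' \ {a, b'} := by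
  ext z
  simp only [Set.mem_sdiff, SimpleGraph.mem_neighborSet, Set.mem_insert_iff,
    Set.mem_singleton_iff, not_or]
  constructor
  · rintro ⟨hz, hzb, hza'⟩
    exact ⟨h z hz hzb hza', (G.ne_of_adj hz).symm, fun e => hab' (e ▸ hz)⟩
  · rintro ⟨hz, hza, hzb'⟩
    exact ⟨h' z hz hzb' hza, fun e => ha'b (e ▸ hz), (G.ne_of_adj hz).symm⟩

/-- `x, x' ∈ N(v)` are non-reduced vertices, witnessed by `y ∈ N_Y(x) \ N_Y(x')` and
`y' ∈ N_Y(x') \ N_Y(x)`. -/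
structure NonReducedPair (G : SimpleGraph V) (v x x' y y' : V) : Prop where
  adj_vx : G.Adj v x
  adj_vx' : G.Adj v x'
  mem_y : y ∈ Yset G v
  mem_y' : y' ∈ Yset G v
  adj_xy : G.Adj x y
  adj_x'y' : G.Adj x' y'
  not_adj_xy' : ¬G.Adj x y'
  not_adj_x'y : ¬G.Adj x' y

namespace NonReducedPair

variable {G : SimpleGraph V} {v x x' y y' z : V}

lemma symm (h : NonReducedPair G v x x' y y') : NonReducedPair G v x' x y' y :=
  ⟨h.2, h.1, h.4, h.3, h.6, h.5, h.8, h.7⟩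

theorem eq_of_mem_Yset [Finite V] (hp : posCount G ≤ 2) (hX : (G.neighborSet v).Pairwise G.Adj)
    (hY : (Yset G v).Pairwise G.Adj) (h : NonReducedPair G v x x' y y')
    (hz : z ∈ Yset G v) (hxz : G.Adj x z) (hx'z : ¬G.Adj x' z) : z = y := by
  by_contra hzy
  obtain ⟨hvx, hvx', hy, hy', hxy, hx'y', hxy', hx'y⟩ := h
  have hxx' : G.Adj x x' := hX hvx hvx' fun e => hx'y (e ▸ hxy)
  have hyz : G.Adj y z := hY hy hz fun e => hzy e.symm
  have hyy' : G.Adj y y' := hY hy hy' fun e => hxy' (e ▸ hxy)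
  have hzy' : G.Adj z y' := hY hz hy' fun e => hxy' (e ▸ hxz)
  have hvy := (mem_Yset_iff.1 hy).2
  have hvy' := (mem_Yset_iff.1 hy').2
  have hvz := (mem_Yset_iff.1 hz).2
  refine (three_le_posCount_of_obstructionY (G := G) (f := ![v, x, x', y, z, y'])
    fun i j => ?_).not_gt (by omega)
  fin_cases i <;> fin_cases j <;> simp [obstructionY] <;>
    first | assumption | exact G.adj_symm ‹_› | exact fun h => absurd (G.adj_symm h) ‹_›

theorem eq_of_adj [Finite V] (hp : posCount G ≤ 2) (hX : (G.neighborSet v).Pairwise G.Adj)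
    (hY : (Yset G v).Pairwise G.Adj) (h : NonReducedPair G v x x' y y')
    (hvz : G.Adj v z) (hzy : G.Adj z y) (hzy' : ¬G.Adj z y') : z = x := by
  by_contra hzx
  obtain ⟨hvx, hvx', hy, hy', hxy, hx'y', hxy', hx'y⟩ := h
  have hxx' : G.Adj x x' := hX hvx hvx' fun e => hx'y (e ▸ hxy)
  have hxz : G.Adj x z := hX hvx hvz fun e => hzx e.symm
  have hx'z : G.Adj x' z := hX hvx' hvz fun e => hx'y (e ▸ hzy)
  have hyy' : G.Adj y y' := hY hy hy' fun e => hxy' (e ▸ hxy)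
  have hvy := (mem_Yset_iff.1 hy).2
  have hvy' := (mem_Yset_iff.1 hy').2
  refine (three_le_posCount_of_obstructionX (G := G) (f := ![v, x, x', z, y, y'])
    fun i j => ?_).not_gt (by omega)
  fin_cases i <;> fin_cases j <;> simp [obstructionX] <;>
    first | assumption | exact G.adj_symm ‹_› | exact fun h => absurd (G.adj_symm h) ‹_›

theorem adj_x'_of_adj_x [Finite V] (hp : posCount G ≤ 2)
    (hX : (G.neighborSet v).Pairwise G.Adj) (hY : (Yset G v).Pairwise G.Adj)
    (h : NonReducedPair G v x x' y y') (hxz : G.Adj x z) (hzy : z ≠ y) (hzx' : z ≠ x') :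
    G.Adj x' z := by
  rcases eq_or_adj_or_mem_Yset G v z with rfl | hvz | hz
  · exact G.adj_symm h.adj_vx'
  · exact hX h.adj_vx' hvz (Ne.symm hzx')
  · by_contra hx'z
    exact hzy (h.eq_of_mem_Yset hp hX hY hz hxz hx'z)

theorem adj_y'_of_adj_y [Finite V] (hp : posCount G ≤ 2)
    (hX : (G.neighborSet v).Pairwise G.Adj) (hY : (Yset G v).Pairwise G.Adj)
    (h : NonReducedPair G v x x' y y') (hyz : G.Adj y z) (hzx : z ≠ x) (hzy' : z ≠ y') :
    G.Adj y' z := by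
  rcases eq_or_adj_or_mem_Yset G v z with rfl | hvz | hz
  · exact absurd (G.adj_symm hyz) (mem_Yset_iff.1 h.mem_y).2
  · by_contra hy'z
    exact hzx (h.eq_of_adj hp hX hY hvz (G.adj_symm hyz) fun e => hy'z (G.adj_symm e))
  · exact hY h.mem_y' hz (Ne.symm hzy')

theorem sdiff_inter_Yset_eq [Finite V] (hp : posCount G ≤ 2)
    (hX : (G.neighborSet v).Pairwise G.Adj) (hY : (Yset G v).Pairwise G.Adj)
    (h : NonReducedPair G v x x' y y') :
    (G.neighborSet x ∩ Yset G v) \ (G.neighborSet x' ∩ Yset G v) = {y} :=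
  Set.eq_singleton_iff_unique_mem.2
    ⟨⟨⟨h.adj_xy, h.mem_y⟩, fun hy => h.not_adj_x'y hy.1⟩,
      fun _ ⟨⟨hxz, hz⟩, hx'z⟩ =>
        h.eq_of_mem_Yset hp hX hY hz hxz fun e => hx'z ⟨e, hz⟩⟩

theorem sdiff_inter_neighborSet_eq [Finite V] (hp : posCount G ≤ 2)
    (hX : (G.neighborSet v).Pairwise G.Adj) (hY : (Yset G v).Pairwise G.Adj)
    (h : NonReducedPair G v x x' y y') :
    (G.neighborSet y ∩ G.neighborSet v) \ (G.neighborSet y' ∩ G.neighborSet v) = {x} :=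
  Set.eq_singleton_iff_unique_mem.2
    ⟨⟨⟨G.adj_symm h.adj_xy, h.adj_vx⟩, fun hx => h.not_adj_xy' (G.adj_symm hx.1)⟩,
      fun _ ⟨⟨hyz, hvz⟩, hy'z⟩ =>
        h.eq_of_adj hp hX hY hvz (G.adj_symm hyz) fun e => hy'z ⟨G.adj_symm e, hvz⟩⟩

theorem congruentQuad [Finite V] (hp : posCount G ≤ 2)
    (hX : (G.neighborSet v).Pairwise G.Adj) (hY : (Yset G v).Pairwise G.Adj)
    (h : NonReducedPair G v x x' y y') : CongruentQuad G x x' y' y := by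
  have hxx' : x ≠ x' := fun e => h.not_adj_x'y (e ▸ h.adj_xy)
  have hyy' : y ≠ y' := fun e => h.not_adj_xy' (e ▸ h.adj_xy)
  have hvy := (mem_Yset_iff.1 h.mem_y).2
  have hvy' := (mem_Yset_iff.1 h.mem_y').2
  refine ⟨hxx', fun e => hvy' (e ▸ h.adj_vx), G.ne_of_adj h.adj_xy, G.ne_of_adj h.adj_x'y',
    fun e => hvy (e ▸ h.adj_vx'), hyy'.symm, hX h.adj_vx h.adj_vx' hxx', h.adj_x'y',
    hY h.mem_y' h.mem_y hyy'.symm, G.adj_symm h.adj_xy, h.not_adj_xy', h.not_adj_x'y, ?_, ?_⟩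
  · exact neighborSet_sdiff_eq_of_adj (fun _ => h.adj_x'_of_adj_x hp hX hY)
      (fun _ => h.symm.adj_x'_of_adj_x hp hX hY) h.not_adj_xy' h.not_adj_x'y
  · exact neighborSet_sdiff_eq_of_adj (fun _ => h.symm.adj_y'_of_adj_y hp hX hY)
      (fun _ => h.adj_y'_of_adj_y hp hX hY) (fun e => h.not_adj_xy' (G.adj_symm e))
      (fun e => h.not_adj_x'y (G.adj_symm e))

end NonReducedPair

theorem nonreduced_Xcomplete_quad_general {n s : ℕ}
    (G : SimpleGraph (Fin n)) (hG : memClass s G)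
    (v : Fin n)
    (X Y : Set (Fin n)) (hX : X = G.neighborSet v) (hY : Y = Yset G v)
    (hXc : IsXComplete G v)
    (x x' : Fin n) (hx : x ∈ X) (hx' : x' ∈ X)
    (h1 : ((G.neighborSet x ∩ Y) \ (G.neighborSet x' ∩ Y)).Nonempty)
    (h2 : ((G.neighborSet x' ∩ Y) \ (G.neighborSet x ∩ Y)).Nonempty) :
    ∃ y y' : Fin n,
      (G.neighborSet x ∩ Y) \ (G.neighborSet x' ∩ Y) = {y} ∧
      (G.neighborSet x' ∩ Y) \ (G.neighborSet x ∩ Y) = {y'} ∧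
      (G.neighborSet y ∩ X) \ (G.neighborSet y' ∩ X) = {x} ∧
      (G.neighborSet y' ∩ X) \ (G.neighborSet y ∩ X) = {x'} ∧
      CongruentQuad G x x' y' y := by
  subst hX hY
  obtain ⟨y, ⟨hxy, hy⟩, hx'y⟩ := h1
  obtain ⟨y', ⟨hx'y', hy'⟩, hxy'⟩ := h2
  have h : NonReducedPair G v x x' y y' :=
    ⟨hx, hx', hy, hy', hxy, hx'y', fun e => hxy' ⟨e, hy'⟩, fun e => hx'y ⟨e, hy⟩⟩
  have hp : posCount G ≤ 2 := hG.1.le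
  obtain ⟨-, hYcl, hXcl⟩ := hXc
  exact ⟨y, y', h.sdiff_inter_Yset_eq hp hXcl hYcl, h.symm.sdiff_inter_Yset_eq hp hXcl hYcl,
    h.sdiff_inter_neighborSet_eq hp hXcl hYcl, h.symm.sdiff_inter_neighborSet_eq hp hXcl hYcl,
    h.congruentQuad hp hXcl hYcl⟩

theorem nonreduced_Xcomplete_quad {n s : ℕ} (hs : 2 ≤ s) (hsn : s ≤ n - 3)
    (G : SimpleGraph (Fin n)) (hconn : G.Connected) (hG : memClass s G)
    (v : Fin n) (hv : IsMinDegVertex G v)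
    (X Y : Set (Fin n)) (hX : X = G.neighborSet v) (hY : Y = Yset G v)
    (hXc : IsXComplete G v)
    (x x' : Fin n) (hx : x ∈ X) (hx' : x' ∈ X)
    (h1 : ((G.neighborSet x ∩ Y) \ (G.neighborSet x' ∩ Y)).Nonempty)
    (h2 : ((G.neighborSet x' ∩ Y) \ (G.neighborSet x ∩ Y)).Nonempty) :
    ∃ y y' : Fin n,
      (G.neighborSet x ∩ Y) \ (G.neighborSet x' ∩ Y) = {y} ∧
      (G.neighborSet x' ∩ Y) \ (G.neighborSet x ∩ Y) = {y'} ∧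
      (G.neighborSet y ∩ X) \ (G.neighborSet y' ∩ X) = {x} ∧
      (G.neighborSet y' ∩ X) \ (G.neighborSet y ∩ X) = {x'} ∧
      CongruentQuad G x x' y' y :=
  nonreduced_Xcomplete_quad_general G hG v X Y hX hY hXc x x' hx hx' h1 h2

end TwoPosEig
end
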